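/- Let (K, val) be a valued field in which every strict unit admits a square root, B its valuation ring, A a subring with B ⊆ A ⊆ K, and ℳ a quasi-quadratic module in A. For g ∈ G define M_g(ℳ) = {p.an(x) : x ∈ ℳ \ {0}, val(x) = g} ∪ {0} ⊆ F. Then: (1) M_g(ℳ) is a quasi-quadratic module in the residue field F for every g ∈ G; (2) if g₁, g₂ ∈ H ∪ G_{≥e} with g₁g₂⁻¹ ∈ H², then M_{g₁}(ℳ) = M_{g₂}(ℳ); (3) if g₁, g₂ ∈ H ∪ G_{≥e} with g₁g₂⁻¹ ∈ G² and g₁ ≤ g₂, then M_{g₁}(ℳ) ⊆ M_{g₂}(ℳ). -/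

import Mathlib

/-- A (multiplicatively written) valuation on a field `K` with value group `G`:
`v` is multiplicative and satisfies the ultrametric inequality on nonzero elements,
and is surjective onto `G`.  The value at `0` is irrelevant (the paper's `∞`). -/
structure MulValuation (K : Type*) [Field K] (G : Type*) [CommGroup G] [LinearOrder G] [IsOrderedMonoid G] where
  v : K → G
  map_mul : ∀ ⦃x y : K⦄, x ≠ 0 → y ≠ 0 → v (x * y) = v x * v y
  min_le_map_add : ∀ ⦃x y : K⦄, x ≠ 0 → y ≠ 0 → x + y ≠ 0 → min (v x) (v y) ≤ v (x + y)
  surj : ∀ g : G, ∃ x : K, x ≠ 0 ∧ v x = g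

namespace MulValuation

variable {K : Type*} [Field K] {G : Type*} [CommGroup G] [LinearOrder G] [IsOrderedMonoid G]

/-- The valuation ring `B = {x : val x ≥ e} ∪ {0}`, as a set. -/
def ringSet (V : MulValuation K G) : Set K := {x : K | x = 0 ∨ 1 ≤ V.v x}

/-- `val(Aˣ)`: the set of values of units of a subring `A` of `K`. -/
def unitVals (V : MulValuation K G) (A : Subring K) : Set G :=
  {g : G | ∃ x : K, x ≠ 0 ∧ x ∈ A ∧ x⁻¹ ∈ A ∧ V.v x = g}

end MulValuation

/-- `π : K → F` is a residue homomorphism for `V`: it is a surjective ring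
homomorphism on the valuation ring, whose nonvanishing locus on the valuation ring
is exactly the set of units of the valuation ring. -/
def MulValuation.IsResidue {K : Type*} [Field K] {G : Type*} [CommGroup G] [LinearOrder G] [IsOrderedMonoid G]
    {F : Type*} [Field F] (V : MulValuation K G) (π : K → F) : Prop :=
  π 0 = 0 ∧ π 1 = 1 ∧
  (∀ x y : K, x ∈ V.ringSet → y ∈ V.ringSet → π (x + y) = π x + π y) ∧
  (∀ x y : K, x ∈ V.ringSet → y ∈ V.ringSet → π (x * y) = π x * π y) ∧
  (∀ x : K, x ≠ 0 → x ∈ V.ringSet → (π x ≠ 0 ↔ V.v x = 1)) ∧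
  (∀ c : F, ∃ x ∈ V.ringSet, π x = c)

/-- `pan` is a pseudo-angular component map for `V` (with residue map `π`),
i.e. it satisfies conditions (1)-(6) of the paper (stated on nonzero elements). -/
def MulValuation.IsPseudoAngular {K : Type*} [Field K] {G : Type*} [CommGroup G] [LinearOrder G] [IsOrderedMonoid G]
    {F : Type*} [Field F] (V : MulValuation K G) (π : K → F) (pan : K → F) : Prop :=
  (∀ x : K, x ≠ 0 → pan x ≠ 0) ∧
  (∀ u : K, u ≠ 0 → V.v u = 1 → pan u = π u) ∧
  (∀ u x : K, u ≠ 0 → V.v u = 1 → x ≠ 0 → pan (u * x) = π u * pan x) ∧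
  (∀ (g : G) (c : F), c ≠ 0 → ∃ w : K, w ≠ 0 ∧ V.v w = g ∧ pan w = c) ∧
  (∀ x₁ x₂ : K, x₁ ≠ 0 → x₂ ≠ 0 → x₁ + x₂ ≠ 0 →
    (V.v x₁ < V.v x₂ → pan (x₁ + x₂) = pan x₁) ∧
    (V.v x₁ = V.v x₂ → pan x₁ + pan x₂ ≠ 0 →
      V.v (x₁ + x₂) = V.v x₁ ∧ pan (x₁ + x₂) = pan x₁ + pan x₂)) ∧
  (∀ x y : K, x ≠ 0 → y ≠ 0 → (∃ u : G, V.v x * (V.v y)⁻¹ = u ^ 2) → pan x = pan y →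
    ∃ u : K, u ≠ 0 ∧ y = u ^ 2 * x) ∧
  (∀ a u : K, a ≠ 0 → u ≠ 0 → ∃ k : F, k ≠ 0 ∧ pan (a * u ^ 2) = pan a * k ^ 2)

/-- `M_g(ℳ)`: the quasi-quadratic module of the residue field generated by `ℳ` and `g`. -/
def MulValuation.Mg {K : Type*} [Field K] {G : Type*} [CommGroup G] [LinearOrder G] [IsOrderedMonoid G]
    {F : Type*} [Field F] (V : MulValuation K G) (pan : K → F) (M : Set K) (g : G) : Set F :=
  {c : F | ∃ x : K, x ≠ 0 ∧ x ∈ M ∧ V.v x = g ∧ pan x = c} ∪ {0}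

namespace MulValuation

variable {K : Type*} [Field K] {G : Type*} [CommGroup G] [LinearOrder G] [IsOrderedMonoid G]
  {F : Type*} [Field F] (V : MulValuation K G)

lemma map_one : V.v 1 = 1 := by
  simpa using V.map_mul one_ne_zero one_ne_zero

lemma map_inv {x : K} (hx : x ≠ 0) : V.v x⁻¹ = (V.v x)⁻¹ := by
  have h := V.map_mul hx (inv_ne_zero hx)
  rw [mul_inv_cancel₀ hx, map_one] at h
  exact eq_inv_of_mul_eq_one_right h.symm

lemma map_sq {x : K} (hx : x ≠ 0) : V.v (x ^ 2) = V.v x ^ 2 := by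
  rw [sq, V.map_mul hx hx, sq]

lemma map_neg_one : V.v (-1) = 1 :=
  pow_left_injective two_ne_zero <| by
    simpa [map_one] using (V.map_sq (neg_ne_zero.mpr one_ne_zero)).symm

lemma mem_of_map_eq_of_mem {A : Subring K} (hBA : V.ringSet ⊆ A) {b u : K} (hb : b ≠ 0)
    (hbA : b ∈ A) (hu : u ≠ 0) (huv : V.v u = V.v b) : u ∈ A := by
  have hunit : u * b⁻¹ ∈ A := hBA <| Or.inr <| by
    rw [V.map_mul hu (inv_ne_zero hb), V.map_inv hb, huv, mul_inv_cancel]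
  simpa [hb] using mul_mem hunit hbA

lemma mem_of_map_mem_unitVals {A : Subring K} (hBA : V.ringSet ⊆ A) {u : K} (hu : u ≠ 0)
    (hA : V.v u ∈ V.unitVals A) : u ∈ A := by
  obtain ⟨b, hb, hbA, -, hvb⟩ := hA
  exact V.mem_of_map_eq_of_mem hBA hb hbA hu hvb.symm

lemma inv_mem_unitVals {A : Subring K} {h : G} (hh : h ∈ V.unitVals A) :
    h⁻¹ ∈ V.unitVals A := by
  obtain ⟨b, hb, hbA, hbiA, hvb⟩ := hh
  exact ⟨b⁻¹, inv_ne_zero hb, hbiA, by rwa [inv_inv], by rw [V.map_inv hb, hvb]⟩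

variable {V} {π : K → F}

lemma IsResidue.map_neg_one (hres : V.IsResidue π) : π (-1) = -1 := by
  obtain ⟨hπ0, hπ1, hπadd, -⟩ := hres
  have h := hπadd 1 (-1) (Or.inr V.map_one.ge) (Or.inr V.map_neg_one.ge)
  rw [add_neg_cancel, hπ0, hπ1] at h
  exact eq_neg_of_add_eq_zero_right h.symm

lemma IsPseudoAngular.map_neg {pan : K → F} (hres : V.IsResidue π)
    (hpan : V.IsPseudoAngular π pan) {x : K} (hx : x ≠ 0) : pan (-x) = -pan x := by
  have h := hpan.2.2.1 (-1) x (neg_ne_zero.mpr one_ne_zero) V.map_neg_one hx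
  rw [neg_one_mul] at h
  rw [h, hres.map_neg_one, neg_one_mul]

section Mg

variable (V) (pan : K → F) (M : Set K)

lemma zero_mem_Mg (g : G) : (0 : F) ∈ V.Mg pan M g :=
  Or.inr rfl

lemma add_mem_Mg (hres : V.IsResidue π) (hpan : V.IsPseudoAngular π pan)
    (hadd : ∀ x ∈ M, ∀ y ∈ M, x + y ∈ M) {g : G} {c d : F}
    (hc : c ∈ V.Mg pan M g) (hd : d ∈ V.Mg pan M g) : c + d ∈ V.Mg pan M g := by
  rcases hc with ⟨x, hx, hxM, hvx, rfl⟩ | rfl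
  · rcases hd with ⟨y, hy, hyM, hvy, rfl⟩ | rfl
    · by_cases hsum : pan x + pan y = 0
      · rw [hsum]
        exact V.zero_mem_Mg pan M g
      -- `x + y = 0` would force `pan y = pan (-x) = -pan x`
      have hxy : x + y ≠ 0 := fun h => hsum <| by
        rw [eq_neg_of_add_eq_zero_right h, hpan.map_neg hres hx, add_neg_cancel]
      obtain ⟨hvxy, hpxy⟩ := (hpan.2.2.2.2.1 x y hx hy hxy).2 (hvx.trans hvy.symm) hsum
      exact Or.inl ⟨x + y, hxy, hadd x hxM y hyM, hvxy.trans hvx, hpxy⟩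
    · rw [add_zero]
      exact Or.inl ⟨x, hx, hxM, hvx, rfl⟩
  · simpa using hd

lemma sq_mul_mem_Mg {A : Subring K} (hres : V.IsResidue π) (hpan : V.IsPseudoAngular π pan)
    (hBA : V.ringSet ⊆ A) (hsq : ∀ a : K, a ∈ A → ∀ x ∈ M, a ^ 2 * x ∈ M)
    {g : G} (a : F) {c : F} (hc : c ∈ V.Mg pan M g) : a ^ 2 * c ∈ V.Mg pan M g := by
  obtain ⟨hπ0, -, -, hπmul, hπunit, hπsurj⟩ := hres
  rcases hc with ⟨x, hx, hxM, hvx, rfl⟩ | rfl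
  · by_cases ha : a = 0
    · simpa [ha] using V.zero_mem_Mg pan M g
    obtain ⟨w, hwB, rfl⟩ := hπsurj a
    have hw : w ≠ 0 := by rintro rfl; exact ha hπ0
    have hvw : V.v w = 1 := (hπunit w hw hwB).mp ha
    have hvw2 : V.v (w ^ 2) = 1 := by rw [V.map_sq hw, hvw, one_pow]
    have hw2 : w ^ 2 ≠ 0 := pow_ne_zero 2 hw
    refine Or.inl ⟨w ^ 2 * x, mul_ne_zero hw2 hx, hsq w (hBA hwB) x hxM, ?_, ?_⟩
    · rw [V.map_mul hw2 hx, hvw2, one_mul, hvx]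
    · rw [hpan.2.2.1 _ x hw2 hvw2 hx, sq, hπmul w w hwB hwB, sq]
  · simpa using V.zero_mem_Mg pan M g

/-- The residue `c` of `x ∈ ℳ` is also the residue of some `w` of value `g₂`; by the
square axiom of `pan`, `w = u² x`, and `u` has value `s`, so `w ∈ ℳ`. -/
lemma Mg_subset_Mg {A : Subring K} (hpan : V.IsPseudoAngular π pan)
    (hsq : ∀ a : K, a ∈ A → ∀ x ∈ M, a ^ 2 * x ∈ M) {g₁ g₂ s : G}
    (hg : g₂ = s ^ 2 * g₁)
    (hsA : ∀ u : K, u ≠ 0 → V.v u = s → u ∈ A) : V.Mg pan M g₁ ⊆ V.Mg pan M g₂ := by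
  rintro c (⟨x, hx, hxM, hvx, rfl⟩ | rfl)
  · obtain ⟨w, hw, hvw, hpw⟩ := hpan.2.2.2.1 g₂ (pan x) (hpan.1 x hx)
    obtain ⟨u, hu, rfl⟩ := hpan.2.2.2.2.2.1 x w hx hw
      ⟨s⁻¹, by rw [hvx, hvw, hg, inv_pow, mul_inv_rev, mul_inv_cancel_left]⟩ hpw.symm
    have hvu : V.v u = s := pow_left_injective two_ne_zero <| by
      have := V.map_mul (pow_ne_zero 2 hu) hx
      rw [hvw, hg, V.map_sq hu, hvx] at this
      exact (mul_right_cancel this).symm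
    exact Or.inl ⟨u ^ 2 * x, hw, hsq u (hsA u hu hvu) x hxM, hvw, hpw⟩
  · exact V.zero_mem_Mg pan M g₂

end Mg

end MulValuation

theorem stmt13_general {K : Type*} [Field K] {G : Type*} [CommGroup G] [LinearOrder G] [IsOrderedMonoid G]
    {F : Type*} [Field F] (V : MulValuation K G) (π : K → F)
    (hres : V.IsResidue π)
    (pan : K → F) (hpan : V.IsPseudoAngular π pan)
    (A : Subring K) (hBA : V.ringSet ⊆ (A : Set K))
    (M : Set K)
    (hadd : ∀ x ∈ M, ∀ y ∈ M, x + y ∈ M)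
    (hsq : ∀ a : K, a ∈ A → ∀ x ∈ M, a ^ 2 * x ∈ M) :
    -- (1) each `M_g(ℳ)` is a quasi-quadratic module in `F`
    (∀ g : G,
      (0 : F) ∈ V.Mg pan M g ∧
      (∀ c ∈ V.Mg pan M g, ∀ d ∈ V.Mg pan M g, c + d ∈ V.Mg pan M g) ∧
      (∀ a : F, ∀ c ∈ V.Mg pan M g, a ^ 2 * c ∈ V.Mg pan M g)) ∧
    -- (2)
    (∀ g₁ g₂ : G, (g₁ ∈ V.unitVals A ∨ 1 ≤ g₁) → (g₂ ∈ V.unitVals A ∨ 1 ≤ g₂) →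
      (∃ h ∈ V.unitVals A, g₁ * g₂⁻¹ = h ^ 2) → V.Mg pan M g₁ = V.Mg pan M g₂) ∧
    -- (3)
    (∀ g₁ g₂ : G, (g₁ ∈ V.unitVals A ∨ 1 ≤ g₁) → (g₂ ∈ V.unitVals A ∨ 1 ≤ g₂) →
      (∃ u : G, g₁ * g₂⁻¹ = u ^ 2) → g₁ ≤ g₂ → V.Mg pan M g₁ ⊆ V.Mg pan M g₂) := by
  refine ⟨fun g => ⟨V.zero_mem_Mg pan M g,
    fun c hc d hd => V.add_mem_Mg pan M hres hpan hadd hc hd,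
    fun a c hc => V.sq_mul_mem_Mg pan M hres hpan hBA hsq a hc⟩, ?_, ?_⟩
  · rintro g₁ g₂ - - ⟨h, hH, hg⟩
    have hg₁ : g₁ = h ^ 2 * g₂ := by rw [← hg, inv_mul_cancel_right]
    have hg₂ : g₂ = h⁻¹ ^ 2 * g₁ := by rw [hg₁, inv_pow, inv_mul_cancel_left]
    refine (V.Mg_subset_Mg pan M hpan hsq hg₂ fun u hu hvu => ?_).antisymm
      (V.Mg_subset_Mg pan M hpan hsq hg₁ fun u hu hvu => ?_)
    · exact V.mem_of_map_mem_unitVals hBA hu (hvu ▸ V.inv_mem_unitVals hH)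
    · exact V.mem_of_map_mem_unitVals hBA hu (hvu ▸ hH)
  · rintro g₁ g₂ - - ⟨s, hg⟩ hle
    have hg₂ : g₂ = s⁻¹ ^ 2 * g₁ := by
      rw [inv_pow, ← hg, mul_inv_rev, inv_inv, inv_mul_cancel_right]
    have hs : 1 ≤ s⁻¹ := (one_le_pow_iff two_ne_zero).mp <| by
      rw [inv_pow, ← hg, mul_inv_rev, inv_inv, ← div_eq_mul_inv, one_le_div']
      exact hle
    exact V.Mg_subset_Mg pan M hpan hsq hg₂ fun u _ hvu => hBA (Or.inr (hvu ▸ hs))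

theorem stmt13 {K : Type*} [Field K] {G : Type*} [CommGroup G] [LinearOrder G] [IsOrderedMonoid G]
    {F : Type*} [Field F] (V : MulValuation K G) (π : K → F)
    (hres : V.IsResidue π)
    (hsqrt : ∀ x : K, x ≠ 0 → V.v x = 1 → π x = 1 → ∃ y : K, x = y ^ 2)
    (pan : K → F) (hpan : V.IsPseudoAngular π pan)
    (A : Subring K) (hBA : V.ringSet ⊆ (A : Set K))
    (M : Set K) (hMA : M ⊆ (A : Set K)) (h0 : (0 : K) ∈ M)
    (hadd : ∀ x ∈ M, ∀ y ∈ M, x + y ∈ M)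
    (hsq : ∀ a : K, a ∈ A → ∀ x ∈ M, a ^ 2 * x ∈ M) :
    -- (1) each `M_g(ℳ)` is a quasi-quadratic module in `F`
    (∀ g : G,
      (0 : F) ∈ V.Mg pan M g ∧
      (∀ c ∈ V.Mg pan M g, ∀ d ∈ V.Mg pan M g, c + d ∈ V.Mg pan M g) ∧
      (∀ a : F, ∀ c ∈ V.Mg pan M g, a ^ 2 * c ∈ V.Mg pan M g)) ∧
    -- (2)
    (∀ g₁ g₂ : G, (g₁ ∈ V.unitVals A ∨ 1 ≤ g₁) → (g₂ ∈ V.unitVals A ∨ 1 ≤ g₂) →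
      (∃ h ∈ V.unitVals A, g₁ * g₂⁻¹ = h ^ 2) → V.Mg pan M g₁ = V.Mg pan M g₂) ∧
    -- (3)
    (∀ g₁ g₂ : G, (g₁ ∈ V.unitVals A ∨ 1 ≤ g₁) → (g₂ ∈ V.unitVals A ∨ 1 ≤ g₂) →
      (∃ u : G, g₁ * g₂⁻¹ = u ^ 2) → g₁ ≤ g₂ → V.Mg pan M g₁ ⊆ V.Mg pan M g₂) :=
  stmt13_general V π hres pan hpan A hBA M hadd hsq
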